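/- Let (Ω, ℱ, P) be an atomless probability space and let X, Y ∈ L¹(Ω, ℱ, P) be arbitrary. Then dist(X, A₂(Y)) = max(0, sup_{p ∈ (0,1]} (F^{(−2)}_Y(p) − F^{(−2)}_X(p))) = max(0, sup_{η ∈ ℝ} (F^{(2)}_X(η) − F^{(2)}_Y(η))). -/

import Mathlib

open MeasureTheory Filter Set

noncomputable section

/-- Distribution function `F_Z(η) = P(Z ≤ η)`. -/
def cdfRV {Ω : Type*} [MeasurableSpace Ω] (P : Measure Ω) (Z : Ω → ℝ) (η : ℝ) : ℝ :=
  (P {ω | Z ω ≤ η}).toReal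

/-- Quantile function `F⁻¹_Z(p) = inf {η | F_Z(η) ≥ p}`. -/
def qf {Ω : Type*} [MeasurableSpace Ω] (P : Measure Ω) (Z : Ω → ℝ) (p : ℝ) : ℝ :=
  sInf {η : ℝ | p ≤ cdfRV P Z η}

/-- Absolute Lorenz function `F^{(-2)}_Z(p) = ∫₀^p F⁻¹_Z(t) dt`. -/
def lorenz {Ω : Type*} [MeasurableSpace Ω] (P : Measure Ω) (Z : Ω → ℝ) (p : ℝ) : ℝ :=
  ∫ t in (0:ℝ)..p, qf P Z t

/-- Shortfall function `F^{(2)}_Z(η) = E[max(η - Z, 0)]`. -/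
def shortfall {Ω : Type*} [MeasurableSpace Ω] (P : Measure Ω) (Z : Ω → ℝ) (η : ℝ) : ℝ :=
  ∫ ω, max (η - Z ω) 0 ∂P

/-- Second-order stochastic dominance. -/
def SSD {Ω : Type*} [MeasurableSpace Ω] (P : Measure Ω) (Z Y : Ω → ℝ) : Prop :=
  ∀ η : ℝ, shortfall P Z η ≤ shortfall P Y η

/-- First-order Wasserstein distance. -/
def W1 {Ω : Type*} [MeasurableSpace Ω] (P : Measure Ω) (X Z : Ω → ℝ) : ℝ :=
  ∫ p in (0:ℝ)..1, |qf P X p - qf P Z p|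

/-- Distance from `X` to the set `A₂(Y)` of integrable random variables dominating `Y`
in the second order, in terms of `W₁`. -/
def distA2 {Ω : Type*} [MeasurableSpace Ω] (P : Measure Ω) (X Y : Ω → ℝ) : ℝ :=
  sInf {d : ℝ | ∃ Z : Ω → ℝ, Integrable Z P ∧ SSD P Z Y ∧ d = W1 P X Z}

/-- An atomless probability space. -/
def Atomless {Ω : Type*} [MeasurableSpace Ω] (P : Measure Ω) : Prop :=
  ∀ s : Set Ω, MeasurableSet s → P s ≠ 0 →
    ∃ t : Set Ω, t ⊆ s ∧ MeasurableSet t ∧ 0 < P t ∧ P t < P s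

/-- `r`-th order shortfall transform `F^{(r)}_Z(η) = (1/Γ(r)) E[max(η-Z,0)^{r-1}]`,
with the convention `max(η-z,0)^0 = 𝟙_{z ≤ η}`. -/
def sfr {Ω : Type*} [MeasurableSpace Ω] (P : Measure Ω) (Z : Ω → ℝ) (r η : ℝ) : ℝ :=
  (1 / Real.Gamma r) * ∫ ω, (if Z ω ≤ η then (η - Z ω) ^ (r - 1) else 0) ∂P

/-- `r`-th order stochastic dominance: `Z ≽_{(r)} Y`. -/
def domR {Ω : Type*} [MeasurableSpace Ω] (P : Measure Ω) (Z Y : Ω → ℝ) (r : ℝ) : Prop :=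
  ∀ η : ℝ, sfr P Z r η ≤ sfr P Y r η

/-!
Restricted to `(0, 1)` with Lebesgue measure, the quantile function `qf P X` has the law of `X`,
so shortfalls, Lorenz values and `W₁` are all integrals over `(0, 1)`. Shortfall and Lorenz
functions are then convex conjugates: `p η - F⁽⁻²⁾(p) ≤ F⁽²⁾(η)`, with equality at `p = F(η)`
and at `η = F⁻¹(p)`. Hence `m ≥ 0` bounds `F⁽²⁾_X - F⁽²⁾_Y` exactly when it bounds
`F⁽⁻²⁾_Y - F⁽⁻²⁾_X`, and the two suprema agree after truncation at `0`.

For the distance, `F⁽²⁾_X(η) - F⁽²⁾_Z(η) ≤ W₁(X, Z)` shows that `d = sup (F⁽²⁾_X - F⁽²⁾_Y)`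
bounds `W₁(X, Z)` from below on `A₂(Y)`. If `d > 0`, the bound is attained by `Z = max(X, c)`
where `F⁽²⁾_X(c) = d`: its quantile function is `max(F⁻¹_X, c)`, so `W₁(X, Z) = F⁽²⁾_X(c)`,
and `F⁽²⁾_Z(η) = F⁽²⁾_X(η) - F⁽²⁾_X(min η c)` stays below `F⁽²⁾_Y`.
-/

open ProbabilityTheory Topology

section Shortfall

variable {Ω : Type*} [MeasurableSpace Ω] {P : Measure Ω} {X Z : Ω → ℝ}

lemma shortfall_nonneg (η : ℝ) : 0 ≤ shortfall P X η :=
  integral_nonneg fun _ => le_max_right _ _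

lemma max_sub_zero_sub_max_sub_zero_le (η a b : ℝ) : max (η - a) 0 - max (η - b) 0 ≤ |a - b| :=
  (le_abs_self _).trans <| (abs_max_sub_max_le_abs _ _ _).trans_eq <| by
    rw [sub_sub_sub_cancel_left, abs_sub_comm]

variable [IsProbabilityMeasure P]

lemma integrable_max_sub_zero (hX : Integrable X P) (η : ℝ) :
    Integrable (fun ω => max (η - X ω) 0) P :=
  ((integrable_const η).sub hX).pos_part

lemma shortfall_sub_shortfall_le (hX : Integrable X P) (hZ : Integrable Z P) (η : ℝ) :
    shortfall P X η - shortfall P Z η ≤ ∫ ω, |X ω - Z ω| ∂P := by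
  rw [shortfall, shortfall, ← integral_sub (integrable_max_sub_zero hX η)
    (integrable_max_sub_zero hZ η)]
  exact integral_mono ((integrable_max_sub_zero hX η).sub (integrable_max_sub_zero hZ η))
    (hX.sub hZ).abs fun ω => max_sub_zero_sub_max_sub_zero_le η (X ω) (Z ω)

lemma sub_integral_le_shortfall (hX : Integrable X P) (η : ℝ) :
    η - ∫ ω, X ω ∂P ≤ shortfall P X η := by
  calc η - ∫ ω, X ω ∂P = ∫ ω, (η - X ω) ∂P := by
        rw [integral_sub (integrable_const η) hX, integral_const, probReal_univ, one_smul]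
    _ ≤ shortfall P X η :=
        integral_mono ((integrable_const η).sub hX) (integrable_max_sub_zero hX η)
          fun ω => le_max_left _ _

lemma lipschitzWith_shortfall (hX : Integrable X P) : LipschitzWith 1 (shortfall P X) := by
  refine LipschitzWith.of_dist_le_mul fun a b => ?_
  rw [NNReal.coe_one, one_mul, Real.dist_eq, Real.dist_eq, shortfall, shortfall,
    ← integral_sub (integrable_max_sub_zero hX a) (integrable_max_sub_zero hX b)]
  have h (ω : Ω) : ‖max (a - X ω) 0 - max (b - X ω) 0‖ ≤ |a - b| := by
    rw [Real.norm_eq_abs]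
    exact (abs_max_sub_max_le_abs _ _ _).trans_eq (by rw [sub_sub_sub_cancel_right])
  simpa using norm_integral_le_of_norm_le_const (μ := P) (Eventually.of_forall h)

lemma tendsto_shortfall_atBot (hX : Integrable X P) :
    Tendsto (shortfall P X) atBot (𝓝 0) := by
  have h := tendsto_integral_filter_of_dominated_convergence (fun ω => |X ω|)
    (l := atBot) (F := fun η ω => max (η - X ω) 0) (f := fun _ => 0)
    (Eventually.of_forall fun η => (integrable_max_sub_zero hX η).aestronglyMeasurable)
    ((eventually_le_atBot 0).mono fun η hη => Eventually.of_forall fun ω => by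
      rw [Real.norm_eq_abs, abs_of_nonneg (le_max_right _ _)]
      exact max_le (by linarith [neg_abs_le (X ω)]) (abs_nonneg _))
    hX.abs
    (Eventually.of_forall fun ω => tendsto_const_nhds.congr'
      ((eventually_le_atBot (X ω)).mono fun η hη => (max_eq_right (by linarith)).symm))
  rw [integral_zero] at h
  exact h

lemma Ioi_subset_range_shortfall (hX : Integrable X P) : Ioi 0 ⊆ range (shortfall P X) := by
  intro d hd
  obtain ⟨a, ha⟩ := ((tendsto_shortfall_atBot hX).eventually (eventually_lt_nhds hd)).exists
  refine intermediate_value_univ a (d + ∫ ω, X ω ∂P) (lipschitzWith_shortfall hX).continuous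
    ⟨ha.le, ?_⟩
  simpa using sub_integral_le_shortfall hX (d + ∫ ω, X ω ∂P)

lemma max_sub_max_zero_eq (η x c : ℝ) :
    max (η - max x c) 0 = max (η - x) 0 - max (min η c - x) 0 := by
  simp only [max_def, min_def]
  split_ifs <;> linarith

lemma shortfall_max_const (hX : Integrable X P) (c η : ℝ) :
    shortfall P (fun ω => max (X ω) c) η = shortfall P X η - shortfall P X (min η c) := by
  simp only [shortfall, max_sub_max_zero_eq η _ c]
  exact integral_sub (integrable_max_sub_zero hX η) (integrable_max_sub_zero hX (min η c))

end Shortfall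

lemma StieltjesFunction.csInf_le_iff (f : StieltjesFunction ℝ) (hf0 : Tendsto f atBot (𝓝 0))
    (hf1 : Tendsto f atTop (𝓝 1)) {p : ℝ} (hp : p ∈ Ioo 0 1) (v : ℝ) :
    sInf {x | p ≤ f x} ≤ v ↔ p ≤ f v := by
  obtain ⟨a, ha⟩ := (hf0.eventually (eventually_lt_nhds hp.1)).exists
  obtain ⟨b, hb⟩ := (hf1.eventually (eventually_gt_nhds hp.2)).exists
  have hbdd : BddBelow {x | p ≤ f x} :=
    ⟨a, fun x hx => le_of_not_gt fun hxa => (hx.trans (f.mono hxa.le)).not_gt ha⟩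
  set s := sInf {x | p ≤ f x}
  have hs : p ≤ f s := by
    have hgt : ∀ x ∈ Ioi s, p ≤ f x := fun x hx => by
      obtain ⟨y, hy, hyx⟩ := exists_lt_of_csInf_lt ⟨b, hb.le⟩ hx
      exact hy.trans (f.mono hyx.le)
    exact ge_of_tendsto ((f.right_continuous s).mono Ioi_subset_Ici_self)
      (eventually_nhdsWithin_of_forall hgt)
  exact ⟨fun h => hs.trans (f.mono h), fun h => csInf_le hbdd h⟩

section Quantile

variable {Ω : Type*} [MeasurableSpace Ω] {P : Measure Ω} [IsProbabilityMeasure P] {X : Ω → ℝ}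

lemma cdfRV_mem_Icc (η : ℝ) : cdfRV P X η ∈ Icc 0 1 :=
  ⟨ENNReal.toReal_nonneg, measureReal_le_one⟩

lemma cdfRV_eq_cdf_map (hX : AEMeasurable X P) : cdfRV P X = cdf (P.map X) := by
  have := Measure.isProbabilityMeasure_map hX
  ext η
  rw [cdf_eq_real, measureReal_def, Measure.map_apply_of_aemeasurable hX measurableSet_Iic]
  rfl

lemma qf_le_iff (hX : AEMeasurable X P) {p : ℝ} (hp : p ∈ Ioo 0 1) (v : ℝ) :
    qf P X p ≤ v ↔ p ≤ cdfRV P X v := by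
  have := Measure.isProbabilityMeasure_map hX
  rw [qf, cdfRV_eq_cdf_map hX]
  exact (cdf _).csInf_le_iff (tendsto_cdf_atBot _) (tendsto_cdf_atTop _) hp v

lemma monotoneOn_qf (hX : AEMeasurable X P) : MonotoneOn (qf P X) (Ioo 0 1) :=
  fun _ hp _ hq hpq => (qf_le_iff hX hp _).2 (hpq.trans ((qf_le_iff hX hq _).1 le_rfl))

lemma aemeasurable_qf (hX : AEMeasurable X P) :
    AEMeasurable (qf P X) (volume.restrict (Ioo 0 1)) :=
  aemeasurable_restrict_of_monotoneOn measurableSet_Ioo (monotoneOn_qf hX)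

lemma map_qf_volume (hX : AEMeasurable X P) :
    (volume.restrict (Ioo 0 1)).map (qf P X) = P.map X := by
  refine Measure.ext_of_Iic _ _ fun v => ?_
  have hpre : qf P X ⁻¹' Iic v ∩ Ioo 0 1 = Ioc 0 (cdfRV P X v) \ {1} := by
    ext t
    simp only [mem_inter_iff, mem_preimage, mem_Iic, mem_Ioo, Set.mem_sdiff, mem_Ioc,
      mem_singleton_iff]
    constructor
    · rintro ⟨hq, ht⟩
      exact ⟨⟨ht.1, (qf_le_iff hX ht v).1 hq⟩, ht.2.ne⟩
    · rintro ⟨⟨ht0, htF⟩, ht1⟩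
      have ht : t ∈ Ioo 0 1 := ⟨ht0, lt_of_le_of_ne (htF.trans (cdfRV_mem_Icc v).2) ht1⟩
      exact ⟨(qf_le_iff hX ht v).2 htF, ht⟩
  rw [Measure.map_apply_of_aemeasurable (aemeasurable_qf hX) measurableSet_Iic,
    Measure.restrict_apply' measurableSet_Ioo, hpre,
    measure_sdiff_null (measure_singleton 1), Real.volume_Ioc, sub_zero,
    Measure.map_apply_of_aemeasurable hX measurableSet_Iic, cdfRV,
    ENNReal.ofReal_toReal (measure_ne_top _ _)]
  rfl

end Quantile

section Transfer

variable {Ω : Type*} [MeasurableSpace Ω] {P : Measure Ω} [IsProbabilityMeasure P] {X : Ω → ℝ}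

lemma integral_comp_qf (hX : AEMeasurable X P) {g : ℝ → ℝ} (hg : Measurable g) :
    ∫ t in (0:ℝ)..1, g (qf P X t) = ∫ ω, g (X ω) ∂P := by
  rw [intervalIntegral.integral_of_le zero_le_one, integral_Ioc_eq_integral_Ioo,
    ← integral_map (aemeasurable_qf hX) hg.aestronglyMeasurable, map_qf_volume hX,
    integral_map hX hg.aestronglyMeasurable]

lemma intervalIntegrable_comp_qf (hX : AEMeasurable X P) {g : ℝ → ℝ} (hg : Measurable g)
    (hgX : Integrable (fun ω => g (X ω)) P) :
    IntervalIntegrable (fun t => g (qf P X t)) volume 0 1 := by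
  rw [intervalIntegrable_iff_integrableOn_Ioo_of_le zero_le_one]
  have hmap := (integrable_map_measure hg.aestronglyMeasurable hX).2 hgX
  rw [← map_qf_volume hX] at hmap
  exact (integrable_map_measure hg.aestronglyMeasurable (aemeasurable_qf hX)).1 hmap

lemma intervalIntegrable_qf (hX : Integrable X P) : IntervalIntegrable (qf P X) volume 0 1 :=
  intervalIntegrable_comp_qf hX.aemeasurable measurable_id hX

lemma shortfall_eq_integral_qf (hX : AEMeasurable X P) (η : ℝ) :
    shortfall P X η = ∫ t in (0:ℝ)..1, max (η - qf P X t) 0 :=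
  (integral_comp_qf hX (g := fun x => max (η - x) 0) (by fun_prop)).symm

lemma intervalIntegrable_max_sub_qf (hX : Integrable X P) (η : ℝ) :
    IntervalIntegrable (fun t => max (η - qf P X t) 0) volume 0 1 :=
  intervalIntegrable_comp_qf hX.aemeasurable (g := fun x => max (η - x) 0) (by fun_prop)
    (integrable_max_sub_zero hX η)

end Transfer

section Conjugacy

variable {Ω : Type*} [MeasurableSpace Ω] {P : Measure Ω} [IsProbabilityMeasure P] {X : Ω → ℝ}

lemma intervalIntegrable_qf_of_mem (hX : Integrable X P) {a b : ℝ} (ha : a ∈ Icc 0 1)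
    (hb : b ∈ Icc 0 1) : IntervalIntegrable (qf P X) volume a b :=
  (intervalIntegrable_qf hX).mono_set <| uIcc_subset_uIcc (by rwa [uIcc_of_le zero_le_one])
    (by rwa [uIcc_of_le zero_le_one])

lemma mul_sub_lorenz_le_shortfall (hX : Integrable X P) {p : ℝ} (hp : p ∈ Icc 0 1) (η : ℝ) :
    p * η - lorenz P X p ≤ shortfall P X η := by
  have hq := intervalIntegrable_qf_of_mem hX ⟨le_rfl, zero_le_one⟩ hp
  have hmax := intervalIntegrable_max_sub_qf hX η
  calc p * η - lorenz P X p = ∫ t in (0:ℝ)..p, (η - qf P X t) := by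
        rw [intervalIntegral.integral_sub intervalIntegrable_const hq,
          intervalIntegral.integral_const, lorenz, sub_zero, smul_eq_mul, mul_comm]
    _ ≤ ∫ t in (0:ℝ)..p, max (η - qf P X t) 0 :=
        intervalIntegral.integral_mono_on hp.1 (intervalIntegrable_const.sub hq)
          (hmax.mono_set (uIcc_subset_uIcc_left (by rwa [uIcc_of_le zero_le_one])))
          fun t _ => le_max_left _ _
    _ ≤ ∫ t in (0:ℝ)..1, max (η - qf P X t) 0 :=
        intervalIntegral.integral_mono_interval le_rfl hp.1 hp.2
          (Eventually.of_forall fun t => le_max_right _ _) hmax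
    _ = shortfall P X η := (shortfall_eq_integral_qf hX.aemeasurable η).symm

lemma shortfall_eq_cdfRV_mul_sub_lorenz (hX : Integrable X P) (η : ℝ) :
    shortfall P X η = cdfRV P X η * η - lorenz P X (cdfRV P X η) := by
  set c := cdfRV P X η
  have hc : c ∈ Icc 0 1 := cdfRV_mem_Icc η
  have hmax := intervalIntegrable_max_sub_qf hX η
  have hIcc : uIcc 0 1 = Icc (0:ℝ) 1 := uIcc_of_le zero_le_one
  have hbelow : ∫ t in (0:ℝ)..c, max (η - qf P X t) 0 = c * η - lorenz P X c := by
    rw [intervalIntegral.integral_congr_Ioo_of_le hc.1 (g := fun t => η - qf P X t)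
      fun t ht => max_eq_left <| sub_nonneg.2 <|
        (qf_le_iff hX.aemeasurable ⟨ht.1, ht.2.trans_le hc.2⟩ η).2 ht.2.le,
      intervalIntegral.integral_sub intervalIntegrable_const
        (intervalIntegrable_qf_of_mem hX ⟨le_rfl, zero_le_one⟩ hc),
      intervalIntegral.integral_const, lorenz, sub_zero, smul_eq_mul, mul_comm]
  have habove : ∫ t in c..1, max (η - qf P X t) 0 = 0 := by
    rw [intervalIntegral.integral_congr_Ioo_of_le hc.2 (g := fun _ => 0)
      fun t ht => max_eq_right <| sub_nonpos.2 <| le_of_lt <| not_le.1 fun h =>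
        ht.1.not_ge ((qf_le_iff hX.aemeasurable ⟨hc.1.trans_lt ht.1, ht.2⟩ η).1 h)]
    simp
  rw [shortfall_eq_integral_qf hX.aemeasurable, ← intervalIntegral.integral_add_adjacent_intervals
    (hmax.mono_set (uIcc_subset_uIcc_left (by rwa [hIcc])))
    (hmax.mono_set (uIcc_subset_uIcc_right (by rwa [hIcc]))), hbelow, habove, add_zero]

lemma lorenz_eq_mul_qf_sub_shortfall (hX : Integrable X P) {p : ℝ} (hp : p ∈ Ioo 0 1) :
    lorenz P X p = p * qf P X p - shortfall P X (qf P X p) := by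
  set η := qf P X p
  set c := cdfRV P X η
  have hc : c ∈ Icc 0 1 := cdfRV_mem_Icc η
  have hpc : p ≤ c := (qf_le_iff hX.aemeasurable hp η).1 le_rfl
  have hflat : ∫ t in p..c, qf P X t = (c - p) * η := by
    rw [intervalIntegral.integral_congr_Ioo_of_le hpc (g := fun _ => η) fun t ht => ?_]
    · simp
    · have ht' : t ∈ Ioo 0 1 := ⟨hp.1.trans ht.1, ht.2.trans_le hc.2⟩
      exact le_antisymm ((qf_le_iff hX.aemeasurable ht' η).2 ht.2.le)
        (monotoneOn_qf hX.aemeasurable hp ht' ht.1.le)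
  have hlorenz : lorenz P X c = lorenz P X p + (c - p) * η := by
    rw [lorenz, lorenz, ← hflat, intervalIntegral.integral_add_adjacent_intervals
      (intervalIntegrable_qf_of_mem hX ⟨le_rfl, zero_le_one⟩ ⟨hp.1.le, hp.2.le⟩)
      (intervalIntegrable_qf_of_mem hX ⟨hp.1.le, hp.2.le⟩ hc)]
  rw [shortfall_eq_cdfRV_mul_sub_lorenz hX η, hlorenz]
  ring

lemma continuousOn_lorenz (hX : Integrable X P) : ContinuousOn (lorenz P X) (Icc 0 1) := by
  have h := intervalIntegral.continuousOn_primitive_interval' (intervalIntegrable_qf hX)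
    left_mem_uIcc
  rwa [uIcc_of_le zero_le_one] at h

end Conjugacy

section Wasserstein

variable {Ω : Type*} [MeasurableSpace Ω] {P : Measure Ω} {X Z : Ω → ℝ}

lemma W1_nonneg : 0 ≤ W1 P X Z :=
  intervalIntegral.integral_nonneg zero_le_one fun _ _ => abs_nonneg _

lemma cdfRV_max_const (c v : ℝ) :
    cdfRV P (fun ω => max (X ω) c) v = if c ≤ v then cdfRV P X v else 0 := by
  unfold cdfRV
  split_ifs with h <;> simp [h]

variable [IsProbabilityMeasure P]

lemma shortfall_sub_shortfall_le_W1 (hX : Integrable X P) (hZ : Integrable Z P) (η : ℝ) :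
    shortfall P X η - shortfall P Z η ≤ W1 P X Z := by
  have hXη := intervalIntegrable_max_sub_qf hX η
  have hZη := intervalIntegrable_max_sub_qf hZ η
  rw [shortfall_eq_integral_qf hX.aemeasurable, shortfall_eq_integral_qf hZ.aemeasurable,
    ← intervalIntegral.integral_sub hXη hZη, W1]
  exact intervalIntegral.integral_mono_on zero_le_one (hXη.sub hZη)
    ((intervalIntegrable_qf hX).sub (intervalIntegrable_qf hZ)).abs
    fun t _ => max_sub_zero_sub_max_sub_zero_le η _ _

lemma qf_max_const (hX : AEMeasurable X P) (c : ℝ) {p : ℝ} (hp : p ∈ Ioo 0 1) :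
    qf P (fun ω => max (X ω) c) p = max (qf P X p) c := by
  refine eq_of_forall_ge_iff fun v => ?_
  rw [qf_le_iff (hX.max aemeasurable_const) hp, max_le_iff, qf_le_iff hX hp, cdfRV_max_const]
  split_ifs with h
  · simp [h]
  · simp [h, hp.1.not_ge]

lemma W1_max_const (hX : Integrable X P) (c : ℝ) :
    W1 P X (fun ω => max (X ω) c) = shortfall P X c := by
  rw [W1, shortfall_eq_integral_qf hX.aemeasurable]
  refine intervalIntegral.integral_congr_Ioo_of_le zero_le_one fun t ht => ?_
  simp only [qf_max_const hX.aemeasurable c ht]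
  rcases le_total (qf P X t) c with h | h
  · rw [max_eq_right h, abs_sub_comm, abs_of_nonneg (sub_nonneg.2 h), max_eq_left (sub_nonneg.2 h)]
  · rw [max_eq_left h, sub_self, abs_zero, max_eq_right (sub_nonpos.2 h)]

end Wasserstein

lemma Real.max_zero_sSup_le_of_forall_le_iff {A B : Set ℝ}
    (h : ∀ m, 0 ≤ m → ((∀ a ∈ A, a ≤ m) ↔ ∀ b ∈ B, b ≤ m)) :
    max 0 (sSup A) ≤ max 0 (sSup B) := by
  by_cases hB : BddAbove B
  · exact max_le (le_max_left _ _) <| Real.sSup_le ((h _ (le_max_left _ _)).2 fun b hb =>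
      (le_csSup hB hb).trans (le_max_right _ _)) (le_max_left _ _)
  · have hA : ¬BddAbove A := fun ⟨M, hM⟩ => hB
      ⟨max M 0, (h _ (le_max_right _ _)).1 fun a ha => (hM ha).trans (le_max_left _ _)⟩
    simp [Real.sSup_of_not_bddAbove hA]

lemma Real.max_zero_sSup_eq_of_forall_le_iff {A B : Set ℝ}
    (h : ∀ m, 0 ≤ m → ((∀ a ∈ A, a ≤ m) ↔ ∀ b ∈ B, b ≤ m)) :
    max 0 (sSup A) = max 0 (sSup B) :=
  le_antisymm (max_zero_sSup_le_of_forall_le_iff h)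
    (max_zero_sSup_le_of_forall_le_iff fun m hm => (h m hm).symm)

section Dominance

variable {Ω : Type*} [MeasurableSpace Ω] {P : Measure Ω} [IsProbabilityMeasure P] {X Y : Ω → ℝ}

lemma lorenz_sub_le_of_shortfall_sub_le (hX : Integrable X P) (hY : Integrable Y P) {m : ℝ}
    (h : ∀ η, shortfall P X η - shortfall P Y η ≤ m) {p : ℝ} (hp : p ∈ Ioc 0 1) :
    lorenz P Y p - lorenz P X p ≤ m := by
  have hopen : ∀ q ∈ Ioo (0:ℝ) 1, lorenz P Y q - lorenz P X q ≤ m := fun q hq => by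
    linarith [lorenz_eq_mul_qf_sub_shortfall hY hq, h (qf P Y q),
      mul_sub_lorenz_le_shortfall hX (Ioo_subset_Icc_self hq) (qf P Y q)]
  -- The attainment at `η = qf P Y p` needs `p < 1`; the endpoint follows by continuity.
  rcases hp.2.lt_or_eq with hp1 | rfl
  · exact hopen p ⟨hp.1, hp1⟩
  · have hcont : ContinuousWithinAt (fun q => lorenz P Y q - lorenz P X q) (Ioo 0 1) 1 :=
      ((continuousOn_lorenz hY).sub (continuousOn_lorenz hX) 1
        (right_mem_Icc.2 zero_le_one)).mono Ioo_subset_Icc_self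
    exact hcont.closure_le (by simp [closure_Ioo zero_ne_one]) continuousWithinAt_const hopen

lemma shortfall_sub_le_of_lorenz_sub_le (hX : Integrable X P) (hY : Integrable Y P) {m : ℝ}
    (hm : 0 ≤ m) (h : ∀ p ∈ Ioc (0:ℝ) 1, lorenz P Y p - lorenz P X p ≤ m) (η : ℝ) :
    shortfall P X η - shortfall P Y η ≤ m := by
  have hc := cdfRV_mem_Icc (P := P) (X := X) η
  have hYoung := mul_sub_lorenz_le_shortfall hY hc η
  rw [shortfall_eq_cdfRV_mul_sub_lorenz hX η]
  rcases hc.1.eq_or_lt with h0 | hpos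
  · rw [← h0, lorenz, intervalIntegral.integral_same]
    linarith [shortfall_nonneg (P := P) (X := Y) η]
  · linarith [h _ ⟨hpos, hc.2⟩]

lemma distA2_eq_max_zero_sSup (hX : Integrable X P) (hY : Integrable Y P) :
    distA2 P X Y = max 0 (sSup (range fun η => shortfall P X η - shortfall P Y η)) := by
  set d := sSup (range fun η => shortfall P X η - shortfall P Y η)
  have hbdd : BddAbove (range fun η => shortfall P X η - shortfall P Y η) :=
    ⟨∫ ω, |X ω - Y ω| ∂P, forall_mem_range.2 (shortfall_sub_shortfall_le hX hY)⟩
  have hd (η : ℝ) : shortfall P X η - shortfall P Y η ≤ d := le_csSup hbdd (mem_range_self η)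
  refine IsLeast.csInf_eq ⟨?_, ?_⟩
  · rcases le_or_gt d 0 with hd0 | hd0
    · refine ⟨X, hX, fun η => by linarith [hd η], ?_⟩
      simp [max_eq_left hd0, W1]
    · obtain ⟨c, hc⟩ := Ioi_subset_range_shortfall hX hd0
      refine ⟨fun ω => max (X ω) c, hX.sup (integrable_const c), fun η => ?_, ?_⟩
      · rw [shortfall_max_const hX]
        rcases le_total η c with h | h
        · rw [min_eq_left h, sub_self]
          exact shortfall_nonneg η
        · rw [min_eq_right h, hc]
          linarith [hd η]
      · rw [W1_max_const hX, hc, max_eq_right hd0.le]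
  · rintro _ ⟨Z, hZ, hZY, rfl⟩
    exact max_le W1_nonneg <| csSup_le (range_nonempty _) <| forall_mem_range.2 fun η => by
      linarith [hZY η, shortfall_sub_shortfall_le_W1 hX hZ η]

end Dominance

theorem stmt14_general {Ω : Type*} [MeasurableSpace Ω] (P : Measure Ω) [IsProbabilityMeasure P]
    (X Y : Ω → ℝ) (hX : Integrable X P) (hY : Integrable Y P) :
    distA2 P X Y =
      max 0 (sSup ((fun p => lorenz P Y p - lorenz P X p) '' Set.Ioc (0:ℝ) 1)) ∧
    distA2 P X Y =
      max 0 (sSup (Set.range fun η : ℝ => shortfall P X η - shortfall P Y η)) := by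
  have hdist := distA2_eq_max_zero_sSup hX hY
  refine ⟨hdist.trans (Real.max_zero_sSup_eq_of_forall_le_iff fun m hm => ?_), hdist⟩
  rw [forall_mem_range, forall_mem_image]
  exact ⟨fun h _ hp => lorenz_sub_le_of_shortfall_sub_le hX hY h hp,
    shortfall_sub_le_of_lorenz_sub_le hX hY hm⟩

/-- for arbitrary integrable `X, Y` on an atomless probability space,
`dist(X,A₂(Y)) = max(0, sup_{p∈(0,1]} (F^{(-2)}_Y(p) - F^{(-2)}_X(p)))
             = max(0, sup_{η∈ℝ} (F^{(2)}_X(η) - F^{(2)}_Y(η)))`. -/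
theorem stmt14 {Ω : Type*} [MeasurableSpace Ω] (P : Measure Ω) [IsProbabilityMeasure P]
    (hP : Atomless P) (X Y : Ω → ℝ) (hX : Integrable X P) (hY : Integrable Y P) :
    distA2 P X Y =
      max 0 (sSup ((fun p => lorenz P Y p - lorenz P X p) '' Set.Ioc (0:ℝ) 1)) ∧
    distA2 P X Y =
      max 0 (sSup (Set.range fun η : ℝ => shortfall P X η - shortfall P Y η)) :=
  stmt14_general P X Y hX hY

end
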